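/- Let ι be a nonempty finite type and K : ι → ℝ with K i ≥ 0 for all i. Define g(p) = ∑_{i∈ι} (p i − K i)·log₂(p i) on the probability simplex Δ = {p : ι → ℝ | ∀ i, p i ≥ 0, ∑_i p i = 1}, with the conventions 0·log₂ 0 = 0 and g(p) = +∞ if p i = 0 for some i with K i > 0. Then g has a unique minimizer over Δ: there is exactly one p* ∈ Δ such that g(p*) < g(p) for all p ∈ Δ with p ≠ p*. -/

import Mathlib

open Real


private lemma phi_strict {K : ℝ} (hK : 0 ≤ K) {x y : ℝ} (hx : 0 ≤ x) (hy : 0 ≤ y)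
    (hxK : 0 < K → 0 < x) (hyK : 0 < K → 0 < y) (hxy : x ≠ y) :
    ((x + y) / 2 - K) * Real.logb 2 ((x + y) / 2) <
      ((x - K) * Real.logb 2 x + (y - K) * Real.logb 2 y) / 2 := by
  have hlog2 : (0 : ℝ) < Real.log 2 := Real.log_pos one_lt_two
  have key : ((x + y) / 2 - K) * Real.log ((x + y) / 2) <
      ((x - K) * Real.log x + (y - K) * Real.log y) / 2 := by
    rcases eq_or_lt_of_le hK with hK0 | hKpos
    · -- K = 0
      have h3 := Real.strictConvexOn_mul_log.2 (Set.mem_Ici.2 hx) (Set.mem_Ici.2 hy) hxy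
        (by norm_num : (0:ℝ) < 1/2) (by norm_num : (0:ℝ) < 1/2) (by norm_num)
      simp only [smul_eq_mul] at h3
      have hm : (1 : ℝ)/2 * x + 1/2 * y = (x + y) / 2 := by ring
      rw [hm] at h3
      calc ((x + y) / 2 - K) * Real.log ((x + y) / 2)
          = (x + y)/2 * Real.log ((x + y)/2) := by rw [← hK0]; ring
        _ < 1/2 * (x * Real.log x) + 1/2 * (y * Real.log y) := h3
        _ = ((x - K) * Real.log x + (y - K) * Real.log y) / 2 := by rw [← hK0]; ring
    · have hx' := hxK hKpos
      have hy' := hyK hKpos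
      have hconv : StrictConvexOn ℝ (Set.Ioi 0) (fun t => t * Real.log t - K * Real.log t) := by
        have h1 : StrictConvexOn ℝ (Set.Ioi 0) (fun t => t * Real.log t) :=
          Real.strictConvexOn_mul_log.subset Set.Ioi_subset_Ici_self (convex_Ioi 0)
        have h2' : ConcaveOn ℝ (Set.Ioi 0) (fun t => K * Real.log t) := by
          simpa [smul_eq_mul] using strictConcaveOn_log_Ioi.concaveOn.smul hK
        have h2 : ConvexOn ℝ (Set.Ioi 0) (fun t => -(K * Real.log t)) := h2'.neg
        convert h1.add_convexOn h2 using 1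
        · ext a b; rfl
        · funext t; simp [sub_eq_add_neg, Pi.add_apply]
      have h3 := hconv.2 (Set.mem_Ioi.2 hx') (Set.mem_Ioi.2 hy') hxy
        (by norm_num : (0:ℝ) < 1/2) (by norm_num : (0:ℝ) < 1/2) (by norm_num)
      simp only [smul_eq_mul] at h3
      have hm : (1 : ℝ)/2 * x + 1/2 * y = (x + y) / 2 := by ring
      rw [hm] at h3
      calc ((x + y) / 2 - K) * Real.log ((x + y) / 2)
          = (x + y)/2 * Real.log ((x + y)/2) - K * Real.log ((x+y)/2) := by ring
        _ < 1/2 * (x * Real.log x - K * Real.log x) + 1/2 * (y * Real.log y - K * Real.log y) := h3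
        _ = ((x - K) * Real.log x + (y - K) * Real.log y) / 2 := by ring
  have e1 : ((x + y) / 2 - K) * Real.logb 2 ((x + y) / 2)
      = (((x + y) / 2 - K) * Real.log ((x + y) / 2)) * (Real.log 2)⁻¹ := by
    simp only [Real.logb, div_eq_mul_inv]; ring
  have e2 : ((x - K) * Real.logb 2 x + (y - K) * Real.logb 2 y) / 2
      = (((x - K) * Real.log x + (y - K) * Real.log y) / 2) * (Real.log 2)⁻¹ := by
    simp only [Real.logb, div_eq_mul_inv]; ring
  rw [e1, e2]
  exact mul_lt_mul_of_pos_right key (inv_pos.2 hlog2)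

private lemma phi_le {K : ℝ} (hK : 0 ≤ K) {x y : ℝ} (hx : 0 ≤ x) (hy : 0 ≤ y)
    (hxK : 0 < K → 0 < x) (hyK : 0 < K → 0 < y) :
    ((x + y) / 2 - K) * Real.logb 2 ((x + y) / 2) ≤
      ((x - K) * Real.logb 2 x + (y - K) * Real.logb 2 y) / 2 := by
  rcases eq_or_ne x y with rfl | hxy
  · have hm : (x + x) / 2 = x := by ring
    rw [hm]; exact le_of_eq (by ring)
  · exact (phi_strict hK hx hy hxK hyK hxy).le

private lemma term_lb {K x : ℝ} (hK : 0 ≤ K) (hx : 0 ≤ x) (hx1 : x ≤ 1) :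
    (-2 : ℝ) ≤ (x - K) * Real.logb 2 x := by
  rcases eq_or_lt_of_le hx with h0 | hxpos
  · simp [← h0, Real.logb]
  · have hlogb_np : Real.logb 2 x ≤ 0 := Real.logb_nonpos one_lt_two hx hx1
    have h1 : 1 - x⁻¹ ≤ Real.log x := Real.one_sub_inv_le_log_of_pos hxpos
    have hxlog : x - 1 ≤ x * Real.log x := by
      have h2 := mul_le_mul_of_nonneg_left h1 hx
      have h3 : x * (1 - x⁻¹) = x - 1 := by field_simp
      linarith
    have hlog2 : (0.6931471803 : ℝ) < Real.log 2 := Real.log_two_gt_d9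
    have h2 : (-2 : ℝ) ≤ x * Real.logb 2 x := by
      have e : x * Real.logb 2 x = (x * Real.log x) / Real.log 2 := by
        simp only [Real.logb]; ring
      rw [e, le_div_iff₀ (by linarith : (0:ℝ) < Real.log 2)]
      nlinarith
    nlinarith [mul_nonneg hK (neg_nonneg.2 hlogb_np)]

/-- The objective `g(p) = ∑_i (p i − K i)·log₂(p i)`, with the conventions
`0·log₂ 0 = 0` and value `+∞` if `p i = 0` while `K i > 0`. -/
noncomputable def gObj {ι : Type*} [Fintype ι] (K : ι → ℝ) (p : ι → ℝ) : EReal :=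
  if ∃ i, p i = 0 ∧ 0 < K i then ⊤
  else ((∑ i, (p i - K i) * Real.logb 2 (p i) : ℝ) : EReal)

theorem stmt9 {ι : Type*} [Fintype ι] [Nonempty ι] (K : ι → ℝ) (hK : ∀ i, 0 ≤ K i) :
    ∃! ps : ι → ℝ,
      (ps ∈ {p : ι → ℝ | (∀ i, 0 ≤ p i) ∧ ∑ i, p i = 1}) ∧
      ∀ p ∈ {p : ι → ℝ | (∀ i, 0 ≤ p i) ∧ ∑ i, p i = 1},
        p ≠ ps → gObj K ps < gObj K p := by
  classical
  set S : Set (ι → ℝ) := {p : ι → ℝ | (∀ i, 0 ≤ p i) ∧ ∑ i, p i = 1} with hSdef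
  set n : ℕ := Fintype.card ι with hn
  have hn0 : 0 < n := Fintype.card_pos
  have hnR : (0 : ℝ) < n := by exact_mod_cast hn0
  set u : ι → ℝ := fun _ => (n : ℝ)⁻¹ with hu
  have huS : u ∈ S := by
    constructor
    · intro i; positivity
    · show ∑ _i : ι, (n : ℝ)⁻¹ = 1
      rw [Finset.sum_const, Finset.card_univ, ← hn, nsmul_eq_mul]
      field_simp
  set h : (ι → ℝ) → ℝ := fun p => ∑ i, (p i - K i) * Real.logb 2 (p i) with hh
  set M : ℝ := h u with hM
  -- every coordinate of a simplex point is at most 1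
  have hle1 : ∀ p ∈ S, ∀ i, p i ≤ 1 := by
    intro p hp i
    have := Finset.single_le_sum (fun j _ => hp.1 j) (Finset.mem_univ i)
    rw [hp.2] at this; exact this
  -- a uniform positive lower bound for positive K's
  obtain ⟨κ, hκpos, hκle⟩ : ∃ κ : ℝ, 0 < κ ∧ ∀ i, 0 < K i → κ ≤ K i := by
    by_cases hF : ∃ i, 0 < K i
    · obtain ⟨i0, hi0⟩ := hF
      set F : Finset ι := Finset.univ.filter fun i => 0 < K i with hF'
      have hFne : (F.image K).Nonempty :=
        ⟨K i0, Finset.mem_image_of_mem K (by simp [hF', hi0])⟩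
      refine ⟨(F.image K).min' hFne, ?_, ?_⟩
      · obtain ⟨j, hj, hjeq⟩ := Finset.mem_image.mp ((F.image K).min'_mem hFne)
        rw [← hjeq]
        exact (Finset.mem_filter.mp hj).2
      · intro i hKi
        exact Finset.min'_le _ _ (Finset.mem_image_of_mem K (by simp [hF', hKi]))
    · exact ⟨1, one_pos, fun i hi => absurd ⟨i, hi⟩ hF⟩
  -- choose ε
  set C : ℝ := max 0 (M + 2 * n + 1) * (2 / κ) + 1 with hC
  have hC1 : (1 : ℝ) ≤ C := by
    have h0 : (0:ℝ) ≤ max 0 (M + 2 * n + 1) * (2 / κ) :=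
      mul_nonneg (le_max_left _ _) (by positivity)
    rw [hC]; linarith
  set ε : ℝ := min ((n : ℝ)⁻¹) (min (κ / 2) ((2 : ℝ) ^ (-C))) with hε
  have hε_pos : 0 < ε := by
    apply lt_min (by positivity) (lt_min (by positivity) (Real.rpow_pos_of_pos two_pos _))
  have hε_un : ε ≤ (n : ℝ)⁻¹ := min_le_left _ _
  have hε_k2 : ε ≤ κ / 2 := le_trans (min_le_right _ _) (min_le_left _ _)
  have hlogε : Real.logb 2 ε ≤ -C := by
    calc Real.logb 2 ε ≤ Real.logb 2 ((2:ℝ) ^ (-C)) :=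
          Real.logb_le_logb_of_le one_lt_two hε_pos
            (le_trans (min_le_right _ _) (min_le_right _ _))
      _ = -C := Real.logb_rpow (by norm_num) (by norm_num)
  have hε_big : M + 2 * (n : ℝ) < (κ / 2) * (-Real.logb 2 ε) := by
    have h1 : C ≤ -Real.logb 2 ε := by linarith
    have h2 : (κ / 2) * C ≤ (κ / 2) * (-Real.logb 2 ε) :=
      mul_le_mul_of_nonneg_left h1 (by positivity)
    have h3 : (κ / 2) * C = max 0 (M + 2 * n + 1) + κ / 2 := by
      rw [hC]; field_simp
    have h4 : M + 2 * (n:ℝ) + 1 ≤ max 0 (M + 2 * n + 1) := le_max_right _ _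
    nlinarith
  -- the truncated simplex
  set S' : Set (ι → ℝ) := S ∩ {p : ι → ℝ | ∀ i, 0 < K i → ε ≤ p i} with hS'
  have huS' : u ∈ S' := ⟨huS, fun i _ => hε_un⟩
  have hS'_closed : IsClosed S' := by
    apply IsClosed.inter
    · rw [hSdef, Set.setOf_and]
      apply IsClosed.inter
      · rw [Set.setOf_forall]
        exact isClosed_iInter fun i => isClosed_le continuous_const (continuous_apply i)
      · exact isClosed_eq (continuous_finset_sum _ fun i _ => continuous_apply i)
          continuous_const
    · rw [Set.setOf_forall]
      refine isClosed_iInter fun i => ?_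
      by_cases hKi : 0 < K i
      · simp only [eq_true hKi, true_implies]
        exact isClosed_le continuous_const (continuous_apply i)
      · simp only [eq_false hKi, false_implies, Set.setOf_true]
        exact isClosed_univ
  have hS'_compact : IsCompact S' := by
    refine IsCompact.of_isClosed_subset (isCompact_univ_pi fun _ : ι => (isCompact_Icc : IsCompact (Set.Icc (0:ℝ) 1)))
      hS'_closed ?_
    intro p hp
    exact fun i _ => ⟨hp.1.1 i, hle1 p hp.1 i⟩
  have hS'_cont : ContinuousOn h S' := by
    rw [hh]
    apply continuousOn_finset_sum
    intro i _
    by_cases hKi : 0 < K i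
    · intro p hp
      have hpi : p i ≠ 0 := ne_of_gt (lt_of_lt_of_le hε_pos (hp.2 i hKi))
      apply ContinuousAt.continuousWithinAt
      have hc1 : ContinuousAt (fun q : ι → ℝ => q i) p := (continuous_apply i).continuousAt
      have : ContinuousAt (fun q : ι → ℝ => (q i - K i) * (Real.log (q i) / Real.log 2)) p :=
        (hc1.sub continuousAt_const).mul
          ((hc1.log hpi).div_const _)
      simpa only [Real.logb] using this
    · have hKi' : K i = 0 := le_antisymm (not_lt.1 hKi) (hK i)
      have he : (fun p : ι → ℝ => (p i - K i) * Real.logb 2 (p i))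
          = fun p => (p i * Real.log (p i)) / Real.log 2 := by
        funext p; simp only [Real.logb, hKi', sub_zero]; ring
      rw [he]
      exact ((Real.continuous_mul_log.comp (continuous_apply i)).div_const _).continuousOn
  obtain ⟨ps, hpsS', hps_min'⟩ := hS'_compact.exists_isMinOn ⟨u, huS'⟩ hS'_cont
  have hps_min : ∀ q ∈ S', h ps ≤ h q := fun q hq => hps_min' hq
  have hpsS : ps ∈ S := hpsS'.1
  have hps_good : ∀ i, 0 < K i → 0 < ps i :=
    fun i hKi => lt_of_lt_of_le hε_pos (hpsS'.2 i hKi)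
  -- gObj on good points
  have hgObj : ∀ p : ι → ℝ, (∀ i, 0 < K i → 0 < p i) → gObj K p = ((h p : ℝ) : EReal) := by
    intro p hp
    rw [gObj, if_neg]
    rintro ⟨i, h0, hKi⟩
    exact absurd h0 (ne_of_gt (hp i hKi))
  -- coercivity
  have hcoerc : ∀ p ∈ S, (∀ i, 0 < K i → 0 < p i) →
      ∀ i, 0 < K i → p i < ε → M < h p := by
    intro p hpS hgood i hKi hpi
    have hterm : ∀ j, (-2 : ℝ) ≤ (p j - K j) * Real.logb 2 (p j) :=
      fun j => term_lb (hK j) (hpS.1 j) (hle1 p hpS j)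
    have hpi0 : 0 < p i := hgood i hKi
    have hKi2 : κ / 2 ≤ K i - p i := by
      have := hκle i hKi
      have := hε_k2
      linarith
    have hlogp : Real.logb 2 (p i) < Real.logb 2 ε := Real.logb_lt_logb one_lt_two hpi0 hpi
    have hlogε_neg : -Real.logb 2 ε ≥ 0 := by linarith [hlogε, hC1]
    have hi : (κ / 2) * (-Real.logb 2 ε) ≤ (p i - K i) * Real.logb 2 (p i) := by
      have e : (p i - K i) * Real.logb 2 (p i) = (K i - p i) * (-Real.logb 2 (p i)) := by ring
      rw [e]
      apply mul_le_mul hKi2 (by linarith) hlogε_neg (by linarith)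
    have hcard : (Finset.univ.erase i).card = n - 1 := by
      rw [Finset.card_erase_of_mem (Finset.mem_univ i), Finset.card_univ, hn]
    have hrest : -2 * (n : ℝ) ≤ ∑ j ∈ Finset.univ.erase i, (p j - K j) * Real.logb 2 (p j) := by
      have h1 := Finset.sum_le_sum (f := fun _ : ι => (-2 : ℝ))
        (g := fun j => (p j - K j) * Real.logb 2 (p j))
        (fun j _ => hterm j) (s := Finset.univ.erase i)
      rw [Finset.sum_const, hcard, nsmul_eq_mul] at h1
      have h2 : ((n - 1 : ℕ) : ℝ) ≤ (n : ℝ) := by exact_mod_cast Nat.sub_le n 1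
      nlinarith
    have hsum : h p = (p i - K i) * Real.logb 2 (p i)
        + ∑ j ∈ Finset.univ.erase i, (p j - K j) * Real.logb 2 (p j) := by
      rw [hh]
      exact (Finset.add_sum_erase _ _ (Finset.mem_univ i)).symm
    rw [hsum]
    linarith
  -- global non-strict minimality among good points
  have hglobal : ∀ p ∈ S, (∀ i, 0 < K i → 0 < p i) → h ps ≤ h p := by
    intro p hpS hgood
    by_cases hp' : ∀ i, 0 < K i → ε ≤ p i
    · exact hps_min p ⟨hpS, hp'⟩
    · push_neg at hp'
      obtain ⟨i, hKi, hpi⟩ := hp'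
      have h1 := hcoerc p hpS hgood i hKi hpi
      have h0 : h ps ≤ M := hps_min u huS'
      linarith
  -- strict minimality among good points
  have hstrict : ∀ p ∈ S, (∀ i, 0 < K i → 0 < p i) → p ≠ ps → h ps < h p := by
    intro p hpS hgood hne
    by_contra hc
    push_neg at hc
    set m : ι → ℝ := fun i => (p i + ps i) / 2 with hm
    have hmS : m ∈ S := by
      constructor
      · intro i
        have := hpS.1 i; have := hpsS.1 i
        simp only [hm]; linarith
      · simp only [hm]
        rw [← Finset.sum_div, Finset.sum_add_distrib, hpS.2, hpsS.2]
        norm_num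
    have hmgood : ∀ i, 0 < K i → 0 < m i := by
      intro i hKi
      have := hpS.1 i; have := hps_good i hKi
      simp only [hm]; linarith
    have hmid : h m < (h p + h ps) / 2 := by
      have e2 : (h p + h ps) / 2
          = ∑ i, ((p i - K i) * Real.logb 2 (p i) + (ps i - K i) * Real.logb 2 (ps i)) / 2 := by
        rw [hh, ← Finset.sum_div, Finset.sum_add_distrib]
      rw [e2, hh]
      obtain ⟨i0, hi0⟩ := Function.ne_iff.mp hne
      apply Finset.sum_lt_sum
      · intro i _
        exact phi_le (hK i) (hpS.1 i) (hpsS.1 i) (hgood i) (hps_good i)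
      · exact ⟨i0, Finset.mem_univ i0,
          phi_strict (hK i0) (hpS.1 i0) (hpsS.1 i0) (hgood i0) (hps_good i0) hi0⟩
    have h1 : h ps ≤ h m := hglobal m hmS hmgood
    linarith
  -- conclude
  have hmain : ∀ p ∈ S, p ≠ ps → gObj K ps < gObj K p := by
    intro p hpS hne
    by_cases hgood : ∀ i, 0 < K i → 0 < p i
    · rw [hgObj p hgood, hgObj ps hps_good, EReal.coe_lt_coe_iff]
      exact hstrict p hpS hgood hne
    · rw [hgObj ps hps_good]
      push_neg at hgood
      obtain ⟨i, hKi, hpi⟩ := hgood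
      have hpi0 : p i = 0 := le_antisymm hpi (hpS.1 i)
      rw [gObj, if_pos ⟨i, hpi0, hKi⟩]
      exact EReal.coe_lt_top _
  refine ⟨ps, ⟨hpsS, hmain⟩, ?_⟩
  intro q hq
  by_contra hne'
  have h1 := hq.2 ps hpsS (Ne.symm hne')
  have h2 := hmain q hq.1 hne'
  exact (lt_asymm h1) h2
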